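/- For every natural number n there exists a divisor m of n such that m ≤ √n and d(n) ≤ max(2, d(m)³), where d denotes the number-of-divisors function. -/
import Mathlib

private lemma card_divisors_pp {p : ℕ} (pp : p.Prime) (k : ℕ) :
    (p ^ k).divisors.card = k + 1 := by
  rw [Nat.divisors_prime_pow pp, Finset.card_map, Finset.card_range]

private lemma aux_ineq {a : ℕ} (ha : 2 ≤ a) : 2 * (a + 1) ≤ (a / 2 + 1) ^ 3 := by
  have h1 : a ≤ 2 * (a / 2) + 1 := by omega
  have h2 : 1 ≤ a / 2 := by omega
  nlinarith [sq_nonneg (a / 2)]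

private lemma key : ∀ n : ℕ, 0 < n →
    ∃ m : ℕ, m ∣ n ∧ m ^ 2 ≤ n ∧ n.divisors.card ≤ max 2 (m.divisors.card ^ 3) := by
  intro n
  induction n using Nat.strong_induction_on with
  | _ n IH =>
  intro hn
  rcases eq_or_ne n 1 with rfl | hn1
  · exact ⟨1, dvd_refl 1, by norm_num, by norm_num⟩
  by_cases hsq : ∃ p : ℕ, p.Prime ∧ p ^ 2 ∣ n
  · -- there is a prime whose square divides n
    obtain ⟨p, hp, hp2⟩ := hsq
    set a := n.factorization p with ha_def
    have ha : 2 ≤ a := (Nat.Prime.pow_dvd_iff_le_factorization hp hn.ne').mp hp2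
    set n' := ordCompl[p] n with hn'_def
    have hpa : p ^ a * n' = n := Nat.ordProj_mul_ordCompl_eq_self n p
    have hn'pos : 0 < n' := Nat.ordCompl_pos p hn.ne'
    have hcop : Nat.Coprime p n' := Nat.coprime_ordCompl hp hn.ne'
    have hpa1 : 1 < p ^ a := by
      have := hp.two_le
      calc 1 < p := hp.one_lt
      _ ≤ p ^ a := Nat.le_self_pow (by omega) p
    have hn'lt : n' < n := by
      rw [← hpa]
      calc n' = 1 * n' := (one_mul n').symm
      _ < p ^ a * n' := (Nat.mul_lt_mul_right hn'pos).mpr hpa1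
    obtain ⟨m', hm'dvd, hm'sq, hm'card⟩ := IH n' hn'lt hn'pos
    have hm'pos : 0 < m' := Nat.pos_of_dvd_of_pos hm'dvd hn'pos
    refine ⟨p ^ (a / 2) * m', ?_, ?_, ?_⟩
    · rw [← hpa]
      exact mul_dvd_mul (pow_dvd_pow p (by omega)) hm'dvd
    · have : (p ^ (a / 2) * m') ^ 2 = p ^ (a / 2 * 2) * m' ^ 2 := by ring
      rw [this, ← hpa]
      exact Nat.mul_le_mul (Nat.pow_le_pow_right hp.pos (by omega)) hm'sq
    · have hcopm : Nat.Coprime (p ^ (a / 2)) m' :=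
        (hcop.coprime_dvd_right hm'dvd).pow_left _
      have hcopn : Nat.Coprime (p ^ a) n' := hcop.pow_left _
      rw [← hpa, hcopn.card_divisors_mul, hcopm.card_divisors_mul,
        card_divisors_pp hp, card_divisors_pp hp]
      have hdm' : 1 ≤ m'.divisors.card := by
        have : m'.divisors.Nonempty := Nat.nonempty_divisors.mpr hm'pos.ne'
        exact Finset.card_pos.mpr this
      have h1 : n'.divisors.card ≤ 2 * m'.divisors.card ^ 3 := by
        rcases max_cases 2 (m'.divisors.card ^ 3) with ⟨h, _⟩ | ⟨h, _⟩ <;> rw [h] at hm'card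
        · have h3 : 1 ≤ m'.divisors.card ^ 3 := Nat.one_le_pow _ _ hdm'
          omega
        · omega
      refine le_trans ?_ (le_max_right _ _)
      calc (a + 1) * n'.divisors.card ≤ (a + 1) * (2 * m'.divisors.card ^ 3) :=
            Nat.mul_le_mul_left _ h1
      _ = (2 * (a + 1)) * m'.divisors.card ^ 3 := by ring
      _ ≤ (a / 2 + 1) ^ 3 * m'.divisors.card ^ 3 :=
            Nat.mul_le_mul_right _ (aux_ineq ha)
      _ = ((a / 2 + 1) * m'.divisors.card) ^ 3 := by ring
  · -- n is squarefree
    push_neg at hsq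
    set p := n.minFac with hp_def
    have hp : p.Prime := Nat.minFac_prime hn1
    have hpdvd : p ∣ n := Nat.minFac_dvd n
    rcases eq_or_ne (n / p) 1 with hq1 | hq1
    · -- n is prime
      have : n = p := by
        have := Nat.div_mul_cancel hpdvd
        rw [hq1, one_mul] at this
        omega
      refine ⟨1, one_dvd n, by nlinarith [hp.two_le], ?_⟩
      rw [this, hp.divisors]
      have : ({1, p} : Finset ℕ).card ≤ 2 := Finset.card_insert_le 1 {p}
      exact le_trans this (le_max_left _ _)
    · set q := (n / p).minFac with hq_def
      have hnp_pos : 0 < n / p := Nat.div_pos (Nat.le_of_dvd hn hpdvd) hp.pos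
      have hnp1 : n / p ≠ 1 := hq1
      have hq : q.Prime := Nat.minFac_prime hnp1
      have hqdvdnp : q ∣ n / p := Nat.minFac_dvd _
      have hqdvd : q ∣ n := hqdvdnp.trans (Nat.div_dvd_of_dvd hpdvd)
      have hpq : p ≠ q := by
        intro h
        apply hsq p hp
        have : p * p ∣ n := by
          rw [← Nat.div_mul_cancel hpdvd]
          exact mul_dvd_mul (h ▸ hqdvdnp) dvd_rfl
        simpa [sq] using this
      have hple : p ≤ q := Nat.minFac_le_of_dvd hq.two_le hqdvd
      have hcoppq : Nat.Coprime p q := (Nat.coprime_primes hp hq).mpr hpq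
      have hpqdvd : p * q ∣ n := Nat.Coprime.mul_dvd_of_dvd_of_dvd hcoppq hpdvd hqdvd
      set n' := n / (p * q) with hn'_def
      have hpqn : p * q * n' = n := Nat.mul_div_cancel' hpqdvd
      have hn'pos : 0 < n' := Nat.div_pos (Nat.le_of_dvd hn hpqdvd)
        (Nat.mul_pos hp.pos hq.pos)
      have hpq1 : 1 < p * q := by nlinarith [hp.two_le, hq.two_le]
      have hn'lt : n' < n := by
        rw [← hpqn]
        calc n' = 1 * n' := (one_mul n').symm
        _ < p * q * n' := (Nat.mul_lt_mul_right hn'pos).mpr hpq1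
      have hcopp : Nat.Coprime p n' := by
        rw [hp.coprime_iff_not_dvd]
        intro hpd
        apply hsq p hp
        rw [← hpqn, sq]
        exact mul_dvd_mul (dvd_mul_right p q) hpd
      have hcopq : Nat.Coprime q n' := by
        rw [hq.coprime_iff_not_dvd]
        intro hqd
        apply hsq q hq
        rw [← hpqn, sq]
        exact mul_dvd_mul (dvd_mul_left q p) hqd
      obtain ⟨m', hm'dvd, hm'sq, hm'card⟩ := IH n' hn'lt hn'pos
      have hm'pos : 0 < m' := Nat.pos_of_dvd_of_pos hm'dvd hn'pos
      refine ⟨p * m', ?_, ?_, ?_⟩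
      · rw [← hpqn]
        exact mul_dvd_mul (dvd_mul_right p q) hm'dvd
      · have h1 : (p * m') ^ 2 = (p * p) * m' ^ 2 := by ring
        rw [h1, ← hpqn]
        exact Nat.mul_le_mul (Nat.mul_le_mul_left p hple) hm'sq
      · have hcoppm : Nat.Coprime p m' := hcopp.coprime_dvd_right hm'dvd
        have hcoppqn : Nat.Coprime (p * q) n' := Nat.Coprime.mul hcopp hcopq
        have hcard_pq : (p * q).divisors.card = 4 := by
          rw [hcoppq.card_divisors_mul]
          have h1 : p.divisors.card = 2 := by
            have := card_divisors_pp hp 1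
            simpa using this
          have h2 : q.divisors.card = 2 := by
            have := card_divisors_pp hq 1
            simpa using this
          rw [h1, h2]
        have hdm' : 1 ≤ m'.divisors.card := by
          have : m'.divisors.Nonempty := Nat.nonempty_divisors.mpr hm'pos.ne'
          exact Finset.card_pos.mpr this
        have h1 : n'.divisors.card ≤ 2 * m'.divisors.card ^ 3 := by
          rcases max_cases 2 (m'.divisors.card ^ 3) with ⟨h, _⟩ | ⟨h, _⟩ <;> rw [h] at hm'card
          · have h3 : 1 ≤ m'.divisors.card ^ 3 := Nat.one_le_pow _ _ hdm'
            omega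
          · omega
        have hcard_p : p.divisors.card = 2 := by
          have := card_divisors_pp hp 1
          simpa using this
        rw [← hpqn, hcoppqn.card_divisors_mul, hcoppm.card_divisors_mul,
          hcard_pq, hcard_p]
        refine le_trans ?_ (le_max_right _ _)
        calc 4 * n'.divisors.card ≤ 4 * (2 * m'.divisors.card ^ 3) :=
              Nat.mul_le_mul_left _ h1
        _ = (2 * m'.divisors.card) ^ 3 := by ring

theorem exists_small_divisor_controlling_divisor_count (n : ℕ) (hn : 0 < n) :
    ∃ m : ℕ, m ∣ n ∧ (m : ℝ) ≤ Real.sqrt n ∧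
      n.divisors.card ≤ max 2 (m.divisors.card ^ 3) := by
  obtain ⟨m, hdvd, hsq, hcard⟩ := key n hn
  refine ⟨m, hdvd, ?_, hcard⟩
  have hcast : (m : ℝ) ^ 2 ≤ (n : ℝ) := by exact_mod_cast hsq
  calc (m : ℝ) = Real.sqrt ((m : ℝ) ^ 2) := (Real.sqrt_sq (Nat.cast_nonneg m)).symm
  _ ≤ Real.sqrt n := Real.sqrt_le_sqrt hcast
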